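/- arXiv:1212.5490 — 3 statements merged into one kernel-verified Lean document; each statement's English description precedes it below -/
import Mathlib

section
/- Let A be a d×d matrix of rank exactly r and B a d×d matrix. Then as h ↓ 0, det(A + hB) = h^{d-r} γ_r(A,B) + O(h^{d-r+1}), where γ_r(A,B) = Σ_{|I|=r} det(G_{A,B}^I). -/
noncomputable def colMix {d : ℕ} (A B : Matrix (Fin d) (Fin d) ℝ) (I : Finset (Fin d)) :
    Matrix (Fin d) (Fin d) ℝ :=
  Matrix.of fun i j => if j ∈ I then A i j else B i j

noncomputable def gammaR {d : ℕ} (r : ℕ) (A B : Matrix (Fin d) (Fin d) ℝ) : ℝ :=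
  ∑ I ∈ Finset.univ.powersetCard r, (colMix A B I).det

/-!
The determinant is multilinear in the columns, so expanding each column of `A + h • B` gives
`det (A + h • B) = ∑ I, h ^ (d - |I|) * det (colMix A B I)`. A mixed matrix with more than
`rank A` columns taken from `A` is singular, so only the terms with `|I| ≤ r` survive; those with
`|I| = r` make up `h ^ (d - r) * γ_r`, and the rest carry a factor `h ^ (d - r + 1)` when
`0 < h ≤ 1`.
-/

open Finset Matrix

namespace Matrix

variable {n K : Type*} [Fintype n] [DecidableEq n] [Field K]

theorem card_le_rank_of_det_ne_zero_of_col_eq {M A : Matrix n n K} (hM : M.det ≠ 0)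
    {s : Finset n} (hs : ∀ i, ∀ j ∈ s, M i j = A i j) : #s ≤ A.rank := by
  have hcols : LinearIndependent K (fun j : s => M.col j) :=
    (linearIndependent_cols_iff_isUnit.mpr ((isUnit_iff_isUnit_det M).mpr hM.isUnit)).comp _
      Subtype.val_injective
  have hsub : M.submatrix id ((↑) : s → n) = A.submatrix id (↑) := by
    ext i j
    exact hs i j j.2
  calc #s = (M.submatrix id ((↑) : s → n))ᵀ.rank :=
        (Fintype.card_coe s).symm.trans (hcols.rank_matrix (M := (M.submatrix id _)ᵀ)).symm
    _ = (A.submatrix id ((↑) : s → n)).rank := by rw [rank_transpose, hsub]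
    _ ≤ A.rank := rank_submatrix_le A id _

end Matrix

variable {d : ℕ} (A B : Matrix (Fin d) (Fin d) ℝ)

theorem det_colMix_eq_zero_of_rank_lt_card {I : Finset (Fin d)} (hI : A.rank < #I) :
    (colMix A B I).det = 0 := by
  by_contra hdet
  have : #I ≤ A.rank := card_le_rank_of_det_ne_zero_of_col_eq hdet fun i j hj => by
    simp [colMix, hj]
  omega

theorem det_add_smul_eq_sum_colMix (h : ℝ) :
    (A + h • B).det = ∑ I : Finset (Fin d), h ^ (d - #I) * (colMix A B I).det := by
  calc (A + h • B).det = detRowAlternating (A.col + (h • B).col) := by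
        rw [← det_transpose]; rfl
    _ = ∑ I : Finset (Fin d), detRowAlternating (I.piecewise A.col (h • B).col) :=
        AlternatingMap.map_add_univ _ _ _
    _ = _ := sum_congr rfl fun I _ => ?_
  have hcols : I.piecewise A.col (h • B).col =
      fun j => (if j ∈ I then 1 else h) • (colMix A B I).col j := by
    ext j i
    by_cases hj : j ∈ I <;> simp [hj, colMix]
  have hprod : ∏ j, (if j ∈ I then 1 else h) = h ^ (d - #I) := by
    rw [prod_ite, prod_const_one, one_mul, prod_const, filter_not, card_sdiff, filter_mem_eq_inter]
    simp
  rw [hcols, AlternatingMap.map_smul_univ, hprod, smul_eq_mul, ← det_transpose (colMix A B I)]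
  rfl

theorem gammaR_eq_sum_ite (r : ℕ) :
    gammaR r A B = ∑ I : Finset (Fin d), if #I = r then (colMix A B I).det else 0 := by
  rw [gammaR, powersetCard_eq_filter, powerset_univ, sum_filter]

theorem abs_pow_mul_det_colMix_sub_ite_le {r : ℕ} (hA : A.rank = r) {h : ℝ}
    (hh : h ∈ Set.Ioc (0 : ℝ) 1) (I : Finset (Fin d)) :
    |h ^ (d - #I) * (colMix A B I).det - if #I = r then h ^ (d - r) * (colMix A B I).det else 0|
      ≤ h ^ (d - r + 1) * |(colMix A B I).det| := by
  rcases lt_trichotomy #I r with hlt | rfl | hgt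
  · have hrd : r ≤ d := hA ▸ A.rank_le_width
    rw [if_neg hlt.ne, sub_zero, abs_mul, abs_of_pos (pow_pos hh.1 _)]
    exact mul_le_mul_of_nonneg_right (pow_le_pow_of_le_one hh.1.le hh.2 (by omega))
      (abs_nonneg _)
  · simpa using mul_nonneg (pow_nonneg hh.1.le _) (abs_nonneg _)
  · simp [det_colMix_eq_zero_of_rank_lt_card A B (hA ▸ hgt)]

theorem det_perturbation_expansion (d r : ℕ) (A B : Matrix (Fin d) (Fin d) ℝ)
    (hA : A.rank = r) :
    ∃ C > (0:ℝ), ∀ h : ℝ, h ∈ Set.Ioc (0:ℝ) 1 →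
      |(A + h • B).det - h ^ (d - r) * gammaR r A B| ≤ C * h ^ (d - r + 1) := by
  set S := ∑ I : Finset (Fin d), |(colMix A B I).det|
  have hS : 0 ≤ S := sum_nonneg fun _ _ => abs_nonneg _
  refine ⟨S + 1, by linarith, fun h hh => ?_⟩
  have hpos : 0 < h ^ (d - r + 1) := pow_pos hh.1 _
  calc |(A + h • B).det - h ^ (d - r) * gammaR r A B|
      = |∑ I : Finset (Fin d), (h ^ (d - #I) * (colMix A B I).det -
          if #I = r then h ^ (d - r) * (colMix A B I).det else 0)| := by
        rw [det_add_smul_eq_sum_colMix, gammaR_eq_sum_ite, mul_sum, sum_sub_distrib]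
        simp only [mul_ite, mul_zero]
    _ ≤ ∑ I : Finset (Fin d), h ^ (d - r + 1) * |(colMix A B I).det| :=
        (abs_sum_le_sum_abs _ _).trans
          (sum_le_sum fun I _ => abs_pow_mul_det_colMix_sub_ite_le A B hA hh I)
    _ ≤ (S + 1) * h ^ (d - r + 1) := by
        rw [← mul_sum]
        nlinarith
end

section
/- Let A be a d×d matrix of rank r, and suppose γ_r(A,B) ≠ 0 for a d×d matrix B. Then det(A + 2hB)/det(A + hB) → 2^{d-r} as h ↓ 0. -/
/-!
Expanding `det (A + h • B)` multilinearly in the columns gives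
`∑ I, h ^ (d - #I) * det (colMix A B I)`, and a column selection `I` with `#I > rank A` contributes
nothing since those columns of `A` are dependent. Hence `det (A + h • B) = h ^ (d - r) * F h` with
`F = reducedDet r A B` a polynomial in `h` and `F 0 = γ_r(A, B) ≠ 0`, so in the ratio the powers of
`h` leave `2 ^ (d - r)` and `F (2 h) / F h → 1`.
-/

open Filter Topology Finset Matrix

theorem tendsto_comp_mul_div_of_eq_pow_mul {f g : ℝ → ℝ} {k : ℕ} (hfg : ∀ x, f x = x ^ k * g x)
    (hg : ContinuousAt g 0) (hg0 : g 0 ≠ 0) (c : ℝ) :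
    Tendsto (fun x => f (c * x) / f x) (𝓝[≠] 0) (𝓝 (c ^ k)) := by
  have hmul : Tendsto (fun x => c * x) (𝓝 0) (𝓝 0) :=
    (continuous_const_mul c).tendsto' 0 0 (mul_zero c)
  have hgc : Tendsto (fun x => g (c * x)) (𝓝[≠] 0) (𝓝 (g 0)) :=
    (hg.tendsto.comp hmul).mono_left nhdsWithin_le_nhds
  have hlim := ((hgc.div (hg.tendsto.mono_left nhdsWithin_le_nhds) hg0).const_mul (c ^ k))
  rw [div_self hg0, mul_one] at hlim
  refine hlim.congr' ?_
  filter_upwards [self_mem_nhdsWithin] with x (hx : x ≠ 0)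
  show c ^ k * (g (c * x) / g x) = _
  rw [hfg, hfg, mul_pow, mul_assoc, mul_div_assoc, mul_div_mul_left _ _ (pow_ne_zero k hx)]

section colMix

variable {d : ℕ} (A B : Matrix (Fin d) (Fin d) ℝ)

theorem transpose_colMix (I : Finset (Fin d)) : (colMix A B I)ᵀ = I.piecewise Aᵀ Bᵀ := by
  ext j i
  by_cases hj : j ∈ I <;> simp [colMix, Finset.piecewise, hj]

theorem det_add_eq_sum_det_colMix : (A + B).det = ∑ I : Finset (Fin d), (colMix A B I).det := by
  rw [← det_transpose, transpose_add]
  refine (detRowAlternating.map_add_univ (Aᵀ : Fin d → Fin d → ℝ) Bᵀ).trans ?_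
  refine Finset.sum_congr rfl fun I _ => ?_
  rw [← det_transpose (colMix A B I), transpose_colMix]
  rfl

theorem colMix_smul_right (h : ℝ) (I : Finset (Fin d)) :
    colMix A (h • B) I = colMix A B I * diagonal fun j => if j ∈ I then 1 else h := by
  ext i j
  by_cases hj : j ∈ I <;> simp [colMix, hj, mul_comm]

theorem det_colMix_smul_right (h : ℝ) (I : Finset (Fin d)) :
    (colMix A (h • B) I).det = h ^ (d - #I) * (colMix A B I).det := by
  rw [colMix_smul_right, det_mul, det_diagonal, Finset.prod_ite, mul_comm]
  simp [Finset.filter_not, Finset.card_sdiff]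

theorem card_le_rank_of_det_colMix_ne_zero {I : Finset (Fin d)} (hI : (colMix A B I).det ≠ 0) :
    #I ≤ A.rank := by
  have hcols : LinearIndependent ℝ (Aᵀ.submatrix (Subtype.val : I → Fin d) id).row := by
    have hrows : (Aᵀ.submatrix (Subtype.val : I → Fin d) id).row
        = (colMix A B I).col ∘ Subtype.val := by
      ext j i
      simp [colMix, j.2]
    rw [hrows]
    exact (linearIndependent_cols_of_det_ne_zero hI).comp _ Subtype.val_injective
  calc #I = (Aᵀ.submatrix (Subtype.val : I → Fin d) id).rank := by simp [hcols.rank_matrix]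
    _ ≤ Aᵀ.rank := rank_submatrix_le _ _ _
    _ = A.rank := rank_transpose A

end colMix

noncomputable def reducedDet {d : ℕ} (r : ℕ) (A B : Matrix (Fin d) (Fin d) ℝ) (h : ℝ) : ℝ :=
  ∑ I : Finset (Fin d), h ^ (r - #I) * (colMix A B I).det

section reducedDet

variable {d : ℕ} (A B : Matrix (Fin d) (Fin d) ℝ)

theorem det_add_smul_eq_pow_mul_reducedDet (h : ℝ) :
    (A + h • B).det = h ^ (d - A.rank) * reducedDet A.rank A B h := by
  rw [det_add_eq_sum_det_colMix, reducedDet, Finset.mul_sum]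
  refine Finset.sum_congr rfl fun I _ => ?_
  rw [det_colMix_smul_right]
  by_cases hI : (colMix A B I).det = 0
  · simp [hI]
  have hIr := card_le_rank_of_det_colMix_ne_zero A B hI
  have hrd : A.rank ≤ d := by simpa using A.rank_le_card_width
  rw [← mul_assoc, ← pow_add]
  congr 2
  omega

theorem reducedDet_rank_zero : reducedDet A.rank A B 0 = gammaR A.rank A B := by
  rw [gammaR, powersetCard_eq_filter, powerset_univ, sum_filter, reducedDet]
  refine Finset.sum_congr rfl fun I _ => ?_
  by_cases hI : (colMix A B I).det = 0
  · simp [hI]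
  rcases (card_le_rank_of_det_colMix_ne_zero A B hI).lt_or_eq with hlt | heq
  · simp [hlt.ne, zero_pow (Nat.sub_ne_zero_of_lt hlt)]
  · simp [heq]

theorem continuous_reducedDet (r : ℕ) : Continuous (reducedDet r A B) := by
  unfold reducedDet
  fun_prop

end reducedDet

theorem det_ratio_identifies_rank (d r : ℕ) (A B : Matrix (Fin d) (Fin d) ℝ)
    (hA : A.rank = r) (hγ : gammaR r A B ≠ 0) :
    Filter.Tendsto (fun h : ℝ => (A + (2 * h) • B).det / (A + h • B).det)
      (nhdsWithin 0 (Set.Ioi 0)) (nhds ((2:ℝ) ^ (d - r))) := by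
  subst hA
  have hF0 : reducedDet A.rank A B 0 ≠ 0 := by rwa [reducedDet_rank_zero]
  have hlim := tendsto_comp_mul_div_of_eq_pow_mul (det_add_smul_eq_pow_mul_reducedDet A B)
    (continuous_reducedDet A B A.rank).continuousAt hF0 2
  exact hlim.mono_left (nhdsWithin_mono _ fun _ hx => ne_of_gt hx)
end

section
/- There is a constant K = K(d) such that for all r ∈ {0,…,d}, all h ∈ (0,1], and all d×d matrices A, B, C, D with rank(A) ≤ r: |det(A + hB + h²C + h²D) − h^{d-r} γ_r(A,B) − h^{d-r+1}(γ_{r-1}(A,B) + γ'_r(A,B,C))| ≤ K h^{d-r+1} Λ^{d-1}(hΛ + ‖D‖), where Λ = ‖A‖+‖B‖+‖C‖+‖D‖. -/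
/-- `γ_{r-1}(A,B)`, with the convention `γ_{-1} = 0`. -/
noncomputable def gammaPred {d : ℕ} (r : ℕ) (A B : Matrix (Fin d) (Fin d) ℝ) : ℝ :=
  if r = 0 then 0 else gammaR (r - 1) A B

/-- `γ'_r(A,B,C)`: sum over ordered partitions `(I₁,I₂,I₃)` of sizes `r, d-r-1, 1`,
with columns of `A` on `I₁`, of `C` on the singleton `I₃`, of `B` elsewhere. -/
noncomputable def gamma' {d : ℕ} (r : ℕ) (A B C : Matrix (Fin d) (Fin d) ℝ) : ℝ :=
  ∑ I ∈ Finset.univ.powersetCard r, ∑ k ∈ Iᶜ,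
    Matrix.det (Matrix.of fun i j =>
      if j ∈ I then A i j else if j = k then C i j else B i j)

/-- Frobenius (Euclidean) norm of a matrix. -/
noncomputable def frob {d : ℕ} (A : Matrix (Fin d) (Fin d) ℝ) : ℝ :=
  Real.sqrt (∑ i, ∑ j, (A i j) ^ 2)

/-!
Expand `det (A + h • B + h ^ 2 • C + h ^ 2 • D)` multilinearly in the columns: it is a sum
over the `4 ^ d` ways of taking each column from `A`, `B`, `C` or `D`, and a term with `a`
columns from `A`, `c` from `C` and `e` from `D` carries the factor `h ^ (d - a + c + e)`.
Terms with more than `r ≥ rank A` columns from `A` vanish. Of the others, those of order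
`h ^ (d - r)` and `h ^ (d - r + 1)` add up to `γ_r`, `γ_{r-1}` and `γ'_r`, except the ones
with a single column from `D`, which are at most `d! Λ^(d-1) ‖D‖`; every remaining term has
order `h ^ (d - r + 2)` and is at most `d! Λ^d`, since a determinant is at most `d!` times the
product of bounds for its columns.
-/

open Finset
open scoped Nat

theorem Finset.singleton_sdiff_of_notMem {α : Type*} [DecidableEq α] {a : α} {s : Finset α}
    (ha : a ∉ s) : {a} \ s = {a} :=
  sdiff_eq_self_of_disjoint (disjoint_singleton_left.2 ha)

theorem Finset.sum_eq_sum_filter_add_three {α M : Type*} [AddCommMonoid M] (s : Finset α)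
    (g : α → M) (p q r : α → Prop) [DecidablePred p] [DecidablePred q] [DecidablePred r]
    (hpq : ∀ x, p x → ¬q x) (hpr : ∀ x, p x → ¬r x) (hqr : ∀ x, q x → ¬r x) :
    ∑ x ∈ s, g x = ∑ x ∈ s with p x, g x + ∑ x ∈ s with q x, g x
      + ∑ x ∈ s with r x, g x + ∑ x ∈ s with ¬p x ∧ ¬q x ∧ ¬r x, g x := by
  simp only [sum_filter, ← sum_add_distrib]
  refine sum_congr rfl fun x _ => ?_
  by_cases hp : p x <;> by_cases hq : q x <;> by_cases hr : r x <;> simp_all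

namespace Matrix

def colSelect {n R ι : Type*} (X : ι → Matrix n n R) (f : n → ι) : Matrix n n R :=
  of fun i j => X (f j) i j

variable {n : Type*} [Fintype n] [DecidableEq n]

theorem abs_det_le_factorial_mul_prod (M : Matrix n n ℝ) (b : n → ℝ)
    (hb : ∀ i j, |M i j| ≤ b j) : |M.det| ≤ (Fintype.card n)! * ∏ j, b j :=
  calc |M.det| = |∑ σ : Equiv.Perm n, Equiv.Perm.sign σ • ∏ j, M (σ j) j| := by
        rw [det_apply]
    _ ≤ ∑ σ : Equiv.Perm n, ∏ j, |M (σ j) j| := by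
        refine (abs_sum_le_sum_abs _ _).trans (sum_le_sum fun σ _ => ?_)
        rcases Int.units_eq_one_or (Equiv.Perm.sign σ) with hσ | hσ <;> simp [hσ, abs_prod]
    _ ≤ ∑ _σ : Equiv.Perm n, ∏ j, b j := by gcongr with σ _ j; exact hb _ _
    _ = (Fintype.card n)! * ∏ j, b j := by simp [Fintype.card_perm]

theorem det_eq_zero_of_rank_lt_card {K : Type*} [Field K] {A M : Matrix n n K} {S : Finset n}
    (hS : A.rank < #S) (hcol : ∀ i, ∀ j ∈ S, M i j = A i j) : M.det = 0 := by
  by_contra hM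
  have hli : LinearIndependent K (Aᵀ.submatrix ((↑) : S → n) id).row := by
    have := (linearIndependent_cols_iff_isUnit.2 ((isUnit_iff_isUnit_det M).2 (Ne.isUnit hM))).comp
      ((↑) : S → n) Subtype.val_injective
    convert this using 1
    ext j i
    simp [hcol i j j.2]
  have := Aᵀ.rank_submatrix_le ((↑) : S → n) id
  rw [hli.rank_matrix, rank_transpose, Fintype.card_coe] at this
  omega

theorem det_sum_smul {R ι : Type*} [CommRing R] [Fintype ι] (c : ι → R)
    (X : ι → Matrix n n R) :
    (∑ t, c t • X t).det = ∑ f : n → ι, (∏ j, c (f j)) * (colSelect X f).det := by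
  have hrows : (∑ t, c t • X t)ᵀ = fun j => ∑ t, c t • (X t)ᵀ j := by
    ext j i
    simp [sum_apply]
  rw [← det_transpose, hrows]
  change (detRowAlternating : (n → R) [⋀^n]→ₗ[R] R).toMultilinearMap _ = _
  rw [MultilinearMap.map_sum]
  refine sum_congr rfl fun f _ => ?_
  rw [MultilinearMap.map_smul_univ, smul_eq_mul, ← det_transpose]
  rfl

end Matrix

namespace SecondOrderExpansion

open Matrix (colSelect)

variable {d : ℕ}

lemma frob_nonneg (A : Matrix (Fin d) (Fin d) ℝ) : 0 ≤ frob A := Real.sqrt_nonneg _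

lemma abs_le_frob (A : Matrix (Fin d) (Fin d) ℝ) (i j : Fin d) : |A i j| ≤ frob A := by
  rw [← Real.sqrt_sq_eq_abs]
  refine Real.sqrt_le_sqrt ?_
  calc A i j ^ 2 ≤ ∑ j', A i j' ^ 2 := single_le_sum (fun _ _ => sq_nonneg _) (mem_univ j)
    _ ≤ ∑ i', ∑ j', A i' j' ^ 2 :=
      single_le_sum (f := fun i' => ∑ j', A i' j' ^ 2)
        (fun _ _ => sum_nonneg fun _ _ => sq_nonneg _) (mem_univ i)

def colCount {ι : Type*} [DecidableEq ι] (t : ι) (f : Fin d → ι) : ℕ := #{j | f j = t}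

section ColumnBounds

variable {ι : Type*} (X : ι → Matrix (Fin d) (Fin d) ℝ)

lemma abs_det_colSelect_le_prod (f : Fin d → ι) :
    |(colSelect X f).det| ≤ d ! * ∏ j, frob (X (f j)) := by
  simpa using Matrix.abs_det_le_factorial_mul_prod (colSelect X f) _
    fun i j => abs_le_frob (X (f j)) i j

variable {X} {L : ℝ} (hL : ∀ t, frob (X t) ≤ L)
include hL

lemma abs_det_colSelect_le_pow (f : Fin d → ι) : |(colSelect X f).det| ≤ d ! * L ^ d := by
  refine (abs_det_colSelect_le_prod X f).trans ?_
  gcongr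
  simpa using prod_le_prod (s := univ) (fun j _ => frob_nonneg _) fun j _ => hL (f j)

lemma abs_det_colSelect_le_of_colCount_eq_one [DecidableEq ι] {f : Fin d → ι} {t : ι}
    (ht : colCount t f = 1) : |(colSelect X f).det| ≤ d ! * (frob (X t) * L ^ (d - 1)) := by
  refine (abs_det_colSelect_le_prod X f).trans ?_
  rw [← prod_filter_mul_prod_filter_not univ fun j => f j = t]
  have hfiber : ∏ j with f j = t, frob (X (f j)) = frob (X t) := by
    rw [prod_congr rfl fun j hj => by rw [(mem_filter.1 hj).2]]
    simp_all [colCount]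
  have hcard : #{j | ¬f j = t} = d - 1 := by
    rw [filter_not, card_sdiff_of_subset (filter_subset _ _)]
    simp_all [colCount]
  rw [hfiber]
  gcongr
  · exact frob_nonneg _
  · simpa [hcard] using prod_le_prod (s := {j | ¬f j = t}) (fun j _ => frob_nonneg _)
      fun j _ => hL (f j)

end ColumnBounds

/-- Column label `t` stands for the matrix `![A, B, C, D] t`, whose coefficient in
`A + h • B + h ^ 2 • C + h ^ 2 • D` is `h ^ hExponent t`. -/
def hExponent : Fin 4 → ℕ := ![0, 1, 2, 2]

def totalExponent (f : Fin d → Fin 4) : ℕ := ∑ j, hExponent (f j)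

lemma sum_colCount (f : Fin d → Fin 4) :
    colCount 0 f + colCount 1 f + colCount 2 f + colCount 3 f = d := by
  have key : ∀ t : Fin 4, ((if t = 0 then 1 else 0) + (if t = 1 then 1 else 0)
      + (if t = 2 then 1 else 0) + (if t = 3 then 1 else 0) : ℕ) = 1 := by decide
  simp only [colCount, card_filter, ← sum_add_distrib]
  simpa using sum_congr rfl fun j (_ : j ∈ univ) => key (f j)

lemma totalExponent_eq (f : Fin d → Fin 4) :
    totalExponent f = colCount 1 f + 2 * colCount 2 f + 2 * colCount 3 f := by
  have key : ∀ t : Fin 4, hExponent t = (if t = 1 then 1 else 0) + 2 * (if t = 2 then 1 else 0)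
      + 2 * (if t = 3 then 1 else 0) := by decide
  simp only [totalExponent, colCount, card_filter, mul_sum, ← sum_add_distrib]
  exact sum_congr rfl fun j _ => key (f j)

lemma det_eq_sum_colSelect (A B C D : Matrix (Fin d) (Fin d) ℝ) (h : ℝ) :
    (A + h • B + h ^ 2 • C + h ^ 2 • D).det
      = ∑ f, h ^ totalExponent f * (colSelect ![A, B, C, D] f).det := by
  have hsum :
      A + h • B + h ^ 2 • C + h ^ 2 • D = ∑ t, h ^ hExponent t • ![A, B, C, D] t := by
    simp [Fin.sum_univ_four, hExponent, add_assoc]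
  simp only [hsum, Matrix.det_sum_smul, prod_pow_eq_pow_sum, totalExponent]

def colPattern (I K : Finset (Fin d)) (j : Fin d) : Fin 4 :=
  if j ∈ I then 0 else if j ∈ K then 2 else 1

lemma filter_colPattern_eq_zero (I K : Finset (Fin d)) :
    ({j | colPattern I K j = 0} : Finset (Fin d)) = I := by
  ext j
  by_cases hI : j ∈ I <;> by_cases hK : j ∈ K <;> simp [colPattern, hI, hK]

lemma filter_colPattern_eq_two (I K : Finset (Fin d)) :
    ({j | colPattern I K j = 2} : Finset (Fin d)) = K \ I := by
  ext j
  rw [mem_filter, mem_sdiff]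
  by_cases hI : j ∈ I <;> by_cases hK : j ∈ K <;> simp [colPattern, hI, hK]

lemma colCount_zero_colPattern (I K : Finset (Fin d)) : colCount 0 (colPattern I K) = #I := by
  rw [colCount, filter_colPattern_eq_zero]

lemma colCount_two_colPattern (I K : Finset (Fin d)) :
    colCount 2 (colPattern I K) = #(K \ I) := by
  rw [colCount, filter_colPattern_eq_two]

lemma colCount_three_colPattern (I K : Finset (Fin d)) : colCount 3 (colPattern I K) = 0 := by
  simp only [colCount, card_eq_zero, filter_eq_empty_iff]
  intro j _
  by_cases hI : j ∈ I <;> by_cases hK : j ∈ K <;> simp [colPattern, hI, hK]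

lemma colPattern_fibers {f : Fin d → Fin 4} (hf : colCount 3 f = 0) :
    colPattern {j | f j = 0} {j | f j = 2} = f := by
  funext j
  have h3 : f j ≠ 3 := by simp_all [colCount, filter_eq_empty_iff]
  simp only [colPattern, mem_filter, mem_univ, true_and]
  generalize f j = t at h3 ⊢
  fin_cases t <;> simp_all

lemma colPattern_singleton_inj {I I' : Finset (Fin d)} {k k' : Fin d} (hk : k ∉ I)
    (hk' : k' ∉ I') (heq : colPattern I {k} = colPattern I' {k'}) : I = I' ∧ k = k' := by
  have hI : I = I' := by
    simpa [filter_colPattern_eq_zero] using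
      congrArg (fun f => ({j | f j = 0} : Finset (Fin d))) heq
  subst hI
  simpa [filter_colPattern_eq_two, singleton_sdiff_of_notMem hk, singleton_sdiff_of_notMem hk']
    using congrArg (fun f => ({j | f j = 2} : Finset (Fin d))) heq

lemma exists_colPattern_singleton_eq {f : Fin d → Fin 4} (h2 : colCount 2 f = 1)
    (h3 : colCount 3 f = 0) : ∃ k, f k = 2 ∧ colPattern {j | f j = 0} {k} = f := by
  obtain ⟨k, hk⟩ := card_eq_one.1 h2
  have hfk : k ∈ ({j | f j = 2} : Finset (Fin d)) := hk ▸ mem_singleton_self k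
  exact ⟨k, by simpa using hfk, by simpa [hk] using colPattern_fibers h3⟩

section LeadingTerms

variable (A B C D : Matrix (Fin d) (Fin d) ℝ) (h : ℝ)

lemma colSelect_colPattern_empty (I : Finset (Fin d)) :
    colSelect ![A, B, C, D] (colPattern I ∅) = colMix A B I := by
  ext i j
  by_cases hI : j ∈ I <;> simp [colSelect, colPattern, colMix, hI]

lemma colSelect_colPattern_singleton (I : Finset (Fin d)) (k : Fin d) :
    colSelect ![A, B, C, D] (colPattern I {k})
      = Matrix.of fun i j => if j ∈ I then A i j else if j = k then C i j else B i j := by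
  ext i j
  simp only [colSelect, colPattern, Matrix.of_apply, mem_singleton]
  split_ifs <;> rfl

lemma sum_colsAB_eq_gammaR (r : ℕ) :
    ∑ f with colCount 2 f = 0 ∧ colCount 3 f = 0 ∧ colCount 0 f = r,
      h ^ totalExponent f * (colSelect ![A, B, C, D] f).det = h ^ (d - r) * gammaR r A B := by
  rw [gammaR, mul_sum]
  symm
  refine sum_nbij' (fun I => colPattern I ∅) (fun f => ({j | f j = 0} : Finset (Fin d)))
    ?_ ?_ ?_ ?_ ?_
  · intro I hI
    simp_all [colCount_zero_colPattern, colCount_two_colPattern, colCount_three_colPattern]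
  · intro f hf
    simp_all [colCount]
  · intro I _
    exact filter_colPattern_eq_zero I ∅
  · intro f hf
    simp only [mem_filter, mem_univ, true_and] at hf
    have h2 : ({j | f j = 2} : Finset (Fin d)) = ∅ := card_eq_zero.1 hf.1
    simpa [h2] using colPattern_fibers hf.2.1
  · intro I hI
    have hI : #I = r := (mem_powersetCard.1 hI).2
    have hw := totalExponent_eq (colPattern I ∅)
    have hs := sum_colCount (colPattern I ∅)
    simp only [colCount_zero_colPattern, colCount_two_colPattern, colCount_three_colPattern,
      empty_sdiff, card_empty] at hw hs
    rw [colSelect_colPattern_empty, hw]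
    congr 2
    omega

lemma sum_colsABC_eq_gamma' (r : ℕ) :
    ∑ f with colCount 2 f = 1 ∧ colCount 3 f = 0 ∧ colCount 0 f = r,
      h ^ totalExponent f * (colSelect ![A, B, C, D] f).det
      = h ^ (d - r + 1) * gamma' r A B C := by
  simp only [gamma', mul_sum]
  symm
  rw [sum_sigma']
  refine sum_bij (fun p _ => colPattern p.1 {p.2}) ?_ ?_ ?_ ?_
  · rintro ⟨I, k⟩ hp
    simp only [mem_sigma, mem_powersetCard, mem_compl] at hp
    simp [colCount_zero_colPattern, colCount_two_colPattern, colCount_three_colPattern,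
      singleton_sdiff_of_notMem hp.2, hp]
  · rintro ⟨I, k⟩ hp ⟨I', k'⟩ hp' heq
    simp only [mem_sigma, mem_compl] at hp hp'
    obtain ⟨rfl, rfl⟩ := colPattern_singleton_inj hp.2 hp'.2 heq
    rfl
  · intro f hf
    simp only [mem_filter, mem_univ, true_and] at hf
    obtain ⟨k, hfk, hf_eq⟩ := exists_colPattern_singleton_eq hf.1 hf.2.1
    refine ⟨⟨({j | f j = 0} : Finset (Fin d)), k⟩, ?_, hf_eq⟩
    simp only [mem_sigma, mem_powersetCard, mem_compl]
    exact ⟨⟨subset_univ _, hf.2.2⟩, by simp [hfk]⟩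
  · rintro ⟨I, k⟩ hp
    simp only [mem_sigma, mem_powersetCard, mem_compl] at hp
    have hw := totalExponent_eq (colPattern I {k})
    have hs := sum_colCount (colPattern I {k})
    simp only [colCount_zero_colPattern, colCount_two_colPattern, colCount_three_colPattern, hp,
      singleton_sdiff_of_notMem hp.2, card_singleton] at hw hs
    rw [colSelect_colPattern_singleton, hw]
    congr 2
    omega

lemma det_sub_leading_terms_eq_sum {r : ℕ} (hr : r ≤ d) :
    (A + h • B + h ^ 2 • C + h ^ 2 • D).det - h ^ (d - r) * gammaR r A B
        - h ^ (d - r + 1) * (gammaPred r A B + gamma' r A B C)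
      = ∑ f with ¬(colCount 2 f = 0 ∧ colCount 3 f = 0 ∧ colCount 0 f = r)
          ∧ ¬(colCount 2 f = 0 ∧ colCount 3 f = 0 ∧ colCount 0 f + 1 = r)
          ∧ ¬(colCount 2 f = 1 ∧ colCount 3 f = 0 ∧ colCount 0 f = r),
        h ^ totalExponent f * (colSelect ![A, B, C, D] f).det := by
  have hpred : ∑ f with colCount 2 f = 0 ∧ colCount 3 f = 0 ∧ colCount 0 f + 1 = r,
      h ^ totalExponent f * (colSelect ![A, B, C, D] f).det
        = h ^ (d - r + 1) * gammaPred r A B := by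
    rcases Nat.eq_zero_or_pos r with rfl | hr0
    · simp [gammaPred]
    · rw [gammaPred, if_neg hr0.ne', show d - r + 1 = d - (r - 1) by omega,
        ← sum_colsAB_eq_gammaR]
      exact sum_congr (filter_congr fun f _ => by omega) fun _ _ => rfl
  rw [det_eq_sum_colSelect, sum_eq_sum_filter_add_three univ _
    (fun f => colCount 2 f = 0 ∧ colCount 3 f = 0 ∧ colCount 0 f = r)
    (fun f => colCount 2 f = 0 ∧ colCount 3 f = 0 ∧ colCount 0 f + 1 = r)
    (fun f => colCount 2 f = 1 ∧ colCount 3 f = 0 ∧ colCount 0 f = r)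
    (fun _ _ _ => by omega) (fun _ _ _ => by omega) (fun _ _ _ => by omega),
    sum_colsAB_eq_gammaR, hpred, sum_colsABC_eq_gamma']
  ring

end LeadingTerms

section RemainderTerms

variable {A B C D : Matrix (Fin d) (Fin d) ℝ} {h L : ℝ} {r : ℕ} {f : Fin d → Fin 4}
  (h0 : 0 ≤ h) (hL : ∀ t, frob (![A, B, C, D] t) ≤ L)
include h0 hL

lemma abs_term_le_of_colCount_three_eq_one (h2 : colCount 2 f = 0) (h3 : colCount 3 f = 1)
    (hr : colCount 0 f = r) :
    |h ^ totalExponent f * (colSelect ![A, B, C, D] f).det|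
      ≤ d ! * h ^ (d - r + 1) * L ^ (d - 1) * (h * L + frob D) := by
  have hw : totalExponent f = d - r + 1 := by
    have := totalExponent_eq f
    have := sum_colCount f
    omega
  have hL0 : 0 ≤ L := (frob_nonneg A).trans (hL 0)
  have := frob_nonneg D
  rw [abs_mul, abs_pow, abs_of_nonneg h0, hw]
  calc h ^ (d - r + 1) * |(colSelect ![A, B, C, D] f).det|
      ≤ h ^ (d - r + 1) * (d ! * (frob D * L ^ (d - 1))) := by
        gcongr
        exact abs_det_colSelect_le_of_colCount_eq_one (t := 3) hL h3
    _ = d ! * h ^ (d - r + 1) * L ^ (d - 1) * frob D := by ring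
    _ ≤ d ! * h ^ (d - r + 1) * L ^ (d - 1) * (h * L + frob D) := by
        gcongr
        exact le_add_of_nonneg_left (mul_nonneg h0 hL0)

lemma abs_term_le_of_totalExponent_ge (h1 : h ≤ 1) (hw : d - r + 2 ≤ totalExponent f) :
    |h ^ totalExponent f * (colSelect ![A, B, C, D] f).det|
      ≤ d ! * h ^ (d - r + 1) * L ^ (d - 1) * (h * L + frob D) := by
  have hd : d = d - 1 + 1 := by
    have := totalExponent_eq f
    have := sum_colCount f
    omega
  have hL0 : 0 ≤ L := (frob_nonneg A).trans (hL 0)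
  have := frob_nonneg D
  rw [abs_mul, abs_pow, abs_of_nonneg h0]
  calc h ^ totalExponent f * |(colSelect ![A, B, C, D] f).det|
      ≤ h ^ (d - r + 1 + 1) * (d ! * L ^ (d - 1 + 1)) := by
        rw [← hd]
        exact mul_le_mul (pow_le_pow_of_le_one h0 h1 hw) (abs_det_colSelect_le_pow hL f)
          (abs_nonneg _) (by positivity)
    _ = d ! * h ^ (d - r + 1) * L ^ (d - 1) * (h * L) := by ring
    _ ≤ d ! * h ^ (d - r + 1) * L ^ (d - 1) * (h * L + frob D) := by
        gcongr
        linarith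

lemma abs_term_le_of_not_leading (hr : r ≤ d) (hA : A.rank ≤ r) (h1 : h ≤ 1)
    (hf : ¬(colCount 2 f = 0 ∧ colCount 3 f = 0 ∧ colCount 0 f = r)
      ∧ ¬(colCount 2 f = 0 ∧ colCount 3 f = 0 ∧ colCount 0 f + 1 = r)
      ∧ ¬(colCount 2 f = 1 ∧ colCount 3 f = 0 ∧ colCount 0 f = r)) :
    |h ^ totalExponent f * (colSelect ![A, B, C, D] f).det|
      ≤ d ! * h ^ (d - r + 1) * L ^ (d - 1) * (h * L + frob D) := by
  rcases lt_or_ge r (colCount 0 f) with hrf | hrf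
  · have hdet : (colSelect ![A, B, C, D] f).det = 0 :=
      Matrix.det_eq_zero_of_rank_lt_card (hA.trans_lt hrf) fun i j hj => by
        simp [colSelect, (mem_filter.1 hj).2]
    have hL0 : 0 ≤ L := (frob_nonneg A).trans (hL 0)
    have := frob_nonneg D
    rw [hdet, mul_zero, abs_zero]
    positivity
  · have := totalExponent_eq f
    have := sum_colCount f
    obtain ⟨h2, h3, h0f⟩ | hw :
        (colCount 2 f = 0 ∧ colCount 3 f = 1 ∧ colCount 0 f = r)
          ∨ d - r + 2 ≤ totalExponent f := by
      omega
    · exact abs_term_le_of_colCount_three_eq_one h0 hL h2 h3 h0f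
    · exact abs_term_le_of_totalExponent_ge h0 hL h1 hw

end RemainderTerms

end SecondOrderExpansion

open SecondOrderExpansion
open Matrix (colSelect)

theorem det_second_order_expansion (d : ℕ) :
    ∃ K > (0:ℝ), ∀ r ≤ d, ∀ h ∈ Set.Ioc (0:ℝ) 1,
      ∀ A B C D : Matrix (Fin d) (Fin d) ℝ, A.rank ≤ r →
        |(A + h • B + (h ^ 2) • C + (h ^ 2) • D).det
            - h ^ (d - r) * gammaR r A B
            - h ^ (d - r + 1) * (gammaPred r A B + gamma' r A B C)|
          ≤ K * h ^ (d - r + 1)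
              * (frob A + frob B + frob C + frob D) ^ (d - 1)
              * (h * (frob A + frob B + frob C + frob D) + frob D) := by
  refine ⟨4 ^ d * d !, by positivity, fun r hr h ⟨h0, h1⟩ A B C D hA => ?_⟩
  set L := frob A + frob B + frob C + frob D
  have hL : ∀ t, frob (![A, B, C, D] t) ≤ L := by
    have := frob_nonneg A; have := frob_nonneg B; have := frob_nonneg C; have := frob_nonneg D
    intro t
    fin_cases t <;> simp <;> linarith
  have hbound : 0 ≤ d ! * h ^ (d - r + 1) * L ^ (d - 1) * (h * L + frob D) := by
    have hL0 : 0 ≤ L := (frob_nonneg A).trans (hL 0)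
    have := frob_nonneg D
    positivity
  rw [det_sub_leading_terms_eq_sum A B C D h hr]
  calc _ ≤ ∑ f with _, |h ^ totalExponent f * (colSelect ![A, B, C, D] f).det| :=
        abs_sum_le_sum_abs _ _
    _ ≤ ∑ _f : Fin d → Fin 4, d ! * h ^ (d - r + 1) * L ^ (d - 1) * (h * L + frob D) :=
        (sum_le_sum fun f hf => abs_term_le_of_not_leading h0.le hL hr hA h1
          (mem_filter.1 hf).2).trans
          (sum_le_sum_of_subset_of_nonneg (filter_subset _ _) fun _ _ _ => hbound)
    _ = 4 ^ d * d ! * h ^ (d - r + 1) * L ^ (d - 1) * (h * L + frob D) := by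
        simp [sum_const, card_univ]
        ring
end
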